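/- arXiv:0909.3458 — 2 statements merged into one kernel-verified Lean document; each statement's English description precedes it below -/
import Mathlib

section
/- Let F : X → X be a bijection and G an involution with G ∘ F ∘ G = F⁻¹, and H = F ∘ G. For z ∈ X and s ∈ ℕ: (a) F^{2s}(G(z)) = z if and only if F^{-s}(z) is fixed by G; (b) F^{2s+1}(G(z)) = z if and only if F^{-s}(z) is fixed by H. -/
/-!
Since `G` reverses `F`, it conjugates `F⁻ˢ` into `Fˢ`: `G (F⁻ˢ z) = Fˢ (G z)`. Hence, for
`w = F⁻ˢ z`, we get `F²ˢ (G z) = Fˢ (G w)` and `F²ˢ⁺¹ (G z) = Fˢ (H w)`, while `z = Fˢ w`;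
both equivalences follow by cancelling the bijection `Fˢ`.
-/

open Function

section Reversing

variable {X : Type*} {F : Equiv.Perm X} {G : X → X}

theorem semiconj_symm_of_involutive_of_reverses (hG : Involutive G)
    (hrev : ∀ x, G (F (G x)) = F.symm x) : Semiconj G F.symm F :=
  have hsemi : Semiconj G F F.symm := fun x => by simpa [hG x] using hrev (G x)
  hsemi.inverses_right F.apply_symm_apply F.apply_symm_apply

theorem Function.Semiconj.apply_inv_pow_apply (h : Semiconj G F.symm F) (n : ℕ) (x : X) :
    G ((F⁻¹ ^ n) x) = (F ^ n) (G x) := by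
  simpa [Equiv.Perm.coe_pow, Equiv.Perm.inv_def] using h.iterate_right n x

end Reversing

/-- Let `F` be a bijection, `G` an involution with `G ∘ F ∘ G = F⁻¹`, and `H = F ∘ G`.
(a) `F^{2s}(G(z)) = z` iff `F^{-s}(z)` is fixed by `G`;
(b) `F^{2s+1}(G(z)) = z` iff `F^{-s}(z)` is fixed by `H`. -/
theorem stmt14 {X : Type*} (F : Equiv.Perm X) (G : X → X)
    (hG : ∀ x, G (G x) = x)
    (hrev : ∀ x, G (F (G x)) = F.symm x)
    (H : X → X) (hH : ∀ x, H x = F (G x))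
    (z : X) (s : ℕ) :
    ((F ^ (2 * s)) (G z) = z ↔ G ((F⁻¹ ^ s) z) = (F⁻¹ ^ s) z) ∧
    ((F ^ (2 * s + 1)) (G z) = z ↔ H ((F⁻¹ ^ s) z) = (F⁻¹ ^ s) z) := by
  have hconj : G ((F⁻¹ ^ s) z) = (F ^ s) (G z) :=
    (semiconj_symm_of_involutive_of_reverses hG hrev).apply_inv_pow_apply s z
  have hz : (F ^ s) ((F⁻¹ ^ s) z) = z := by simp
  generalize (F⁻¹ ^ s) z = w at hz hconj ⊢
  subst hz
  have heven : (F ^ (2 * s)) (G ((F ^ s) w)) = (F ^ s) (G w) := by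
    rw [two_mul, pow_add, Equiv.Perm.mul_apply, hconj]
  have hodd : (F ^ (2 * s + 1)) (G ((F ^ s) w)) = (F ^ s) (H w) := by
    rw [hH, hconj, show 2 * s + 1 = s + 1 + s by ring, pow_add, pow_succ]
    simp only [Equiv.Perm.mul_apply]
  simp only [heven, hodd, EmbeddingLike.apply_eq_iff_eq, and_self]
end

section
/- For each real m ≥ 1, let A_m = I(m+1, m, m+1) + I(m, m-1, m-1) for m ≥ 2, where I(a,b,c) = (π/4)·∫_{arccot(2a-1)}^{arccot(2b-1)} ((2c-1)tan η - 1)² (π/4 - η) dη. Then A_m = π²/(48 m⁴) + O(m⁻⁵) as m → ∞; in particular the series Σ_{m≥2} A_m converges. -/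
open MeasureTheory Filter

/-- Inverse cotangent with values in `(0, π/2)` for positive arguments. -/
noncomputable def arccot (x : ℝ) : ℝ := Real.pi / 2 - Real.arctan x

/-- `I(a,b,c) = (π/4)·∫_{arccot(2a-1)}^{arccot(2b-1)} ((2c-1)tan η - 1)² (π/4 - η) dη`. -/
noncomputable def Iarea (a b c : ℝ) : ℝ :=
  (Real.pi / 4) *
    ∫ η in arccot (2 * a - 1)..arccot (2 * b - 1),
      ((2 * c - 1) * Real.tan η - 1) ^ 2 * (Real.pi / 4 - η)

/-- `A_m = I(m+1,m,m+1) + I(m,m-1,m-1)`. -/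
noncomputable def Am (m : ℝ) : ℝ := Iarea (m + 1) m (m + 1) + Iarea m (m - 1) (m - 1)

/-!
Substituting `t = tan η` turns each integral into `∫ (K t - 1)² w(t) dt` over `[1/p, 1/q]`,
where `w(t) = (π/4 - arctan t)/(1 + t²)` and `p, q, K` are among `2m - 3, 2m - 1, 2m + 1`.
Since `|w(t) - π/4| ≤ 2t` and `t = O(1/m)` on intervals of length `O(1/m²)` where `(K t - 1)²`
is `O(1/m²)`, freezing `w` at `π/4` costs `O(m⁻⁵)`. The frozen integrals are cubic polynomials
and add up to `π² / (3 (2m-1)² (2m+1) (2m-3)) = π²/(48 m⁴) + O(m⁻⁵)`. Explicit constants for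
`m ≥ 2` give the `O(m⁻⁵)` bound and `|A_m| ≤ 43/m⁴`, hence summability.
-/

open Real Set

lemma arctan_le_self {x : ℝ} (hx : 0 ≤ x) : arctan x ≤ x := by
  simpa only [tan_arctan] using le_tan (arctan_nonneg.mpr hx) (arctan_lt_pi_div_two x)

lemma arccot_eq_arctan_inv {x : ℝ} (hx : 0 < x) : arccot x = arctan x⁻¹ :=
  (arctan_inv_of_pos hx).symm

lemma integral_comp_arctan_div {g : ℝ → ℝ} (hg : ContinuousOn g (Ioo (-(π / 2)) (π / 2)))
    (a b : ℝ) : ∫ t in a..b, g (arctan t) / (1 + t ^ 2) = ∫ η in arctan a..arctan b, g η := by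
  simp only [div_eq_mul_inv]
  exact intervalIntegral.integral_comp_mul_deriv' (fun t _ => hasDerivAt_arctan' t)
    (by fun_prop (disch := intros; positivity)) (hg.mono (image_subset_iff.mpr fun t _ =>
      ⟨neg_pi_div_two_lt_arctan t, arctan_lt_pi_div_two t⟩))

lemma integral_arccot_eq {p q K : ℝ} (hp : 0 < p) (hq : 0 < q) :
    ∫ η in arccot p..arccot q, (K * tan η - 1) ^ 2 * (π / 4 - η) =
      ∫ t in p⁻¹..q⁻¹, (K * t - 1) ^ 2 * ((π / 4 - arctan t) / (1 + t ^ 2)) := by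
  rw [arccot_eq_arctan_inv hp, arccot_eq_arctan_inv hq, ← integral_comp_arctan_div]
  · simp only [tan_arctan, mul_div_assoc]
  · exact ((continuousOn_tan_Ioo.const_smul K).sub continuousOn_const |>.pow 2).mul
      (by fun_prop)

lemma abs_arctan_weight_sub_le {t : ℝ} (ht : 0 ≤ t) :
    |(π / 4 - arctan t) / (1 + t ^ 2) - π / 4| ≤ 2 * t := by
  have h0 : 0 ≤ arctan t := arctan_nonneg.mpr ht
  have h1 := arctan_le_self ht
  have hpi := pi_le_four
  have hden : 0 < 1 + t ^ 2 := by positivity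
  have key : (π / 4 - arctan t) / (1 + t ^ 2) - π / 4
      = -((arctan t + π / 4 * t ^ 2) / (1 + t ^ 2)) := by
    field_simp; ring
  rw [key, abs_neg, abs_of_nonneg (by positivity), div_le_iff₀ hden]
  nlinarith [sq_nonneg (t - 1), pi_pos]

lemma integral_mul_sub_one_sq (K a b : ℝ) (hK : K ≠ 0) :
    ∫ t in a..b, (K * t - 1) ^ 2 = ((K * b - 1) ^ 3 - (K * a - 1) ^ 3) / (3 * K) := by
  rw [intervalIntegral.integral_comp_mul_sub (fun x => x ^ 2) hK, integral_pow, smul_eq_mul]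
  field_simp
  norm_num

lemma abs_integral_mul_arctan_weight_sub_le {f : ℝ → ℝ} {u v M : ℝ} (hf : Continuous f)
    (hu : 0 ≤ u) (huv : u ≤ v) (hM : ∀ t ∈ Icc u v, |f t| ≤ M) :
    |(∫ t in u..v, f t * ((π / 4 - arctan t) / (1 + t ^ 2))) - π / 4 * ∫ t in u..v, f t|
      ≤ 2 * v * M * (v - u) := by
  have hfw : Continuous fun t => f t * ((π / 4 - arctan t) / (1 + t ^ 2)) :=
    hf.mul <| (continuous_const.sub continuous_arctan).div (by fun_prop) fun t => by positivity
  rw [← intervalIntegral.integral_const_mul, ← intervalIntegral.integral_sub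
    (hfw.intervalIntegrable _ _) ((hf.const_mul _).intervalIntegrable _ _)]
  have hbound : ∀ t ∈ uIoc u v, ‖f t * ((π / 4 - arctan t) / (1 + t ^ 2)) - π / 4 * f t‖
      ≤ 2 * v * M := by
    rw [uIoc_of_le huv]
    rintro t ⟨hut, htv⟩
    have ht : 0 ≤ t := hu.trans hut.le
    have hft := hM t ⟨hut.le, htv⟩
    rw [Real.norm_eq_abs, mul_comm (π / 4), ← mul_sub, abs_mul]
    calc _ ≤ M * (2 * v) := mul_le_mul hft ((abs_arctan_weight_sub_le ht).trans (by linarith))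
          (abs_nonneg _) ((abs_nonneg _).trans hft)
      _ = 2 * v * M := by ring
  simpa [abs_of_nonneg (sub_nonneg.mpr huv)] using
    intervalIntegral.norm_integral_le_of_norm_le_const hbound

lemma abs_mul_sub_one_le {p q K t : ℝ} (hq : 0 < q) (hqK : q ≤ K) (hKp : K ≤ p)
    (ht : t ∈ Icc p⁻¹ q⁻¹) : |K * t - 1| ≤ K * (q⁻¹ - p⁻¹) := by
  have hK : 0 < K := hq.trans_le hqK
  have hKq : 1 ≤ K * q⁻¹ := by rw [← div_eq_mul_inv, one_le_div hq]; exact hqK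
  have hKp' : K * p⁻¹ ≤ 1 := by rw [← div_eq_mul_inv, div_le_one (hK.trans_le hKp)]; exact hKp
  have h1 := mul_le_mul_of_nonneg_left ht.1 hK.le
  have h2 := mul_le_mul_of_nonneg_left ht.2 hK.le
  rw [abs_le]
  constructor <;> nlinarith

lemma abs_integral_arccot_sub_le {p q K : ℝ} (hq : 0 < q) (hqK : q ≤ K) (hKp : K ≤ p) :
    |(∫ η in arccot p..arccot q, (K * tan η - 1) ^ 2 * (π / 4 - η))
        - π / 4 * (((K * q⁻¹ - 1) ^ 3 - (K * p⁻¹ - 1) ^ 3) / (3 * K))|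
      ≤ 2 * K ^ 2 * (q⁻¹ - p⁻¹) ^ 3 / q := by
  have hp : 0 < p := hq.trans_le (hqK.trans hKp)
  have hK : 0 < K := hq.trans_le hqK
  have hpq : p⁻¹ ≤ q⁻¹ := inv_anti₀ hq (hqK.trans hKp)
  rw [integral_arccot_eq hp hq, ← integral_mul_sub_one_sq K _ _ hK.ne']
  calc _ ≤ 2 * q⁻¹ * (K * (q⁻¹ - p⁻¹)) ^ 2 * (q⁻¹ - p⁻¹) :=
        abs_integral_mul_arctan_weight_sub_le (by fun_prop) (by positivity) hpq fun t ht => by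
          rw [abs_pow]
          exact pow_le_pow_left₀ (abs_nonneg _) (abs_mul_sub_one_le hq hqK hKp ht) 2
    _ = 2 * K ^ 2 * (q⁻¹ - p⁻¹) ^ 3 / q := by ring

/-- `A_m` with the weight `(π/4 - arctan t)/(1 + t²)` frozen at its value `π/4` at `t = 0`. -/
noncomputable def Am₀ (m : ℝ) : ℝ := π ^ 2 / (3 * ((2 * m - 1) ^ 2 * (2 * m + 1) * (2 * m - 3)))

lemma abs_Am_sub_Am₀_le {m : ℝ} (hm : 2 ≤ m) :
    |Am m - Am₀ m|
      ≤ 4 * π / ((2 * m - 1) ^ 4 * (2 * m + 1)) + 4 * π / ((2 * m - 3) ^ 2 * (2 * m - 1) ^ 3) := by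
  have hm1 : 2 * m - 1 ≠ 0 := by linarith
  have hm2 : 2 * m + 1 ≠ 0 := by linarith
  have hm3 : 2 * m - 3 ≠ 0 := by linarith
  have h1 := abs_integral_arccot_sub_le (p := 2 * m + 1) (q := 2 * m - 1) (K := 2 * m + 1)
    (by linarith) (by linarith) le_rfl
  have h2 := abs_integral_arccot_sub_le (p := 2 * m - 1) (q := 2 * m - 3) (K := 2 * m - 3)
    (by linarith) le_rfl (by linarith)
  set I₁ := ∫ η in arccot (2 * m + 1)..arccot (2 * m - 1),
    ((2 * m + 1) * tan η - 1) ^ 2 * (π / 4 - η)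
  set I₂ := ∫ η in arccot (2 * m - 1)..arccot (2 * m - 3),
    ((2 * m - 3) * tan η - 1) ^ 2 * (π / 4 - η)
  have hAm : Am m = π / 4 * I₁ + π / 4 * I₂ := by
    simp only [Am, Iarea, show 2 * (m + 1) - 1 = 2 * m + 1 by ring,
      show 2 * (m - 1) - 1 = 2 * m - 3 by ring, I₁, I₂]
  have hmain : π / 4 * (π / 4 * ((((2 * m + 1) * (2 * m - 1)⁻¹ - 1) ^ 3
        - ((2 * m + 1) * (2 * m + 1)⁻¹ - 1) ^ 3) / (3 * (2 * m + 1))))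
      + π / 4 * (π / 4 * ((((2 * m - 3) * (2 * m - 3)⁻¹ - 1) ^ 3
        - ((2 * m - 3) * (2 * m - 1)⁻¹ - 1) ^ 3) / (3 * (2 * m - 3))))
      = Am₀ m := by
    rw [Am₀]
    field_simp
    ring
  have herr₁ : π / 4 * (2 * (2 * m + 1) ^ 2 * ((2 * m - 1)⁻¹ - (2 * m + 1)⁻¹) ^ 3 / (2 * m - 1))
      = 4 * π / ((2 * m - 1) ^ 4 * (2 * m + 1)) := by
    field_simp
    ring
  have herr₂ : π / 4 * (2 * (2 * m - 3) ^ 2 * ((2 * m - 3)⁻¹ - (2 * m - 1)⁻¹) ^ 3 / (2 * m - 3))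
      = 4 * π / ((2 * m - 3) ^ 2 * (2 * m - 1) ^ 3) := by
    field_simp
    ring
  have hπ : 0 ≤ π / 4 := by positivity
  obtain ⟨l₁, u₁⟩ := abs_le.mp h1
  obtain ⟨l₂, u₂⟩ := abs_le.mp h2
  rw [hAm, ← hmain, ← herr₁, ← herr₂, abs_le]
  constructor <;> linarith [mul_le_mul_of_nonneg_left l₁ hπ, mul_le_mul_of_nonneg_left u₁ hπ,
    mul_le_mul_of_nonneg_left l₂ hπ, mul_le_mul_of_nonneg_left u₂ hπ]

lemma abs_Am₀_sub_le {m : ℝ} (hm : 2 ≤ m) : |Am₀ m - π ^ 2 / (48 * m ^ 4)| ≤ 4 / m ^ 5 := by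
  have hm0 : 0 < m := by linarith
  have hm1 : 2 * m - 1 ≠ 0 := by linarith
  have hm2 : 2 * m + 1 ≠ 0 := by linarith
  have hm3 : 0 < 2 * m - 3 := by linarith
  have hD : 9 / 4 * m ^ 4 ≤ (2 * m - 1) ^ 2 * (2 * m + 1) * (2 * m - 3) := by
    have h1 : (3 / 2 * m) ^ 2 ≤ (2 * m - 1) ^ 2 := by gcongr; linarith
    calc 9 / 4 * m ^ 4 = (3 / 2 * m) ^ 2 * (2 * m) * (m / 2) := by ring
      _ ≤ _ := by gcongr <;> linarith
  have hN : 0 ≤ 32 * m ^ 3 - 8 * m ^ 2 - 8 * m + 3 := by nlinarith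
  have hN' : 32 * m ^ 3 - 8 * m ^ 2 - 8 * m + 3 ≤ 35 * m ^ 3 := by nlinarith
  have hpi : π ^ 2 ≤ 10 := by nlinarith [pi_lt_d2, pi_pos]
  have hdiff : Am₀ m - π ^ 2 / (48 * m ^ 4) = π ^ 2 * (32 * m ^ 3 - 8 * m ^ 2 - 8 * m + 3)
      / (48 * m ^ 4 * ((2 * m - 1) ^ 2 * (2 * m + 1) * (2 * m - 3))) := by
    rw [Am₀]
    field_simp
    ring
  rw [hdiff, abs_of_nonneg (by positivity)]
  calc _ ≤ 10 * (35 * m ^ 3) / (48 * m ^ 4 * (9 / 4 * m ^ 4)) := by gcongr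
    _ ≤ 4 / m ^ 5 := by
      rw [div_le_div_iff₀ (by positivity) (by positivity)]
      nlinarith [pow_pos hm0 8]

lemma Am_error_terms_le {m : ℝ} (hm : 2 ≤ m) :
    4 * π / ((2 * m - 1) ^ 4 * (2 * m + 1)) + 4 * π / ((2 * m - 3) ^ 2 * (2 * m - 1) ^ 3)
      ≤ 80 / m ^ 5 := by
  have hm0 : 0 < m := by linarith
  have hpi : 4 * π ≤ 16 := by linarith [pi_le_four]
  have h₁ : 4 * π / ((2 * m - 1) ^ 4 * (2 * m + 1)) ≤ 16 / (m ^ 4 * m) := by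
    gcongr <;> linarith
  have h₂ : 4 * π / ((2 * m - 3) ^ 2 * (2 * m - 1) ^ 3) ≤ 16 / ((m / 2) ^ 2 * m ^ 3) := by
    gcongr <;> linarith
  calc _ ≤ 16 / (m ^ 4 * m) + 16 / ((m / 2) ^ 2 * m ^ 3) := add_le_add h₁ h₂
    _ = 80 / m ^ 5 := by field_simp; ring

lemma abs_Am_sub_le {m : ℝ} (hm : 2 ≤ m) : |Am m - π ^ 2 / (48 * m ^ 4)| ≤ 84 / m ^ 5 := by
  have := abs_sub_le (Am m) (Am₀ m) (π ^ 2 / (48 * m ^ 4))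
  have hsum : 80 / m ^ 5 + 4 / m ^ 5 = 84 / m ^ 5 := by ring
  linarith [abs_Am_sub_Am₀_le hm, Am_error_terms_le hm, abs_Am₀_sub_le hm]

lemma abs_Am_le {m : ℝ} (hm : 2 ≤ m) : |Am m| ≤ 43 / m ^ 4 := by
  have hm0 : 0 < m := by linarith
  have hmain : π ^ 2 / (48 * m ^ 4) ≤ 1 / m ^ 4 := by
    calc π ^ 2 / (48 * m ^ 4) ≤ 48 / (48 * m ^ 4) := by gcongr; nlinarith [pi_le_four, pi_pos]
      _ = 1 / m ^ 4 := by field_simp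
  have herr : 84 / m ^ 5 ≤ 42 / m ^ 4 := by
    rw [div_le_div_iff₀ (by positivity) (by positivity)]
    nlinarith [pow_pos hm0 4]
  have := abs_sub_abs_le_abs_sub (Am m) (π ^ 2 / (48 * m ^ 4))
  rw [abs_of_nonneg (by positivity : 0 ≤ π ^ 2 / (48 * m ^ 4))] at this
  have hsum : 42 / m ^ 4 + 1 / m ^ 4 = 43 / m ^ 4 := by ring
  linarith [abs_Am_sub_le hm]

/-- `A_m = π²/(48 m⁴) + O(m⁻⁵)` as `m → ∞`; in particular `Σ_{m ≥ 2} A_m` converges. -/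
theorem stmt18 :
    Asymptotics.IsBigO atTop
      (fun m : ℝ => Am m - Real.pi ^ 2 / (48 * m ^ 4))
      (fun m : ℝ => m ^ (-5 : ℤ)) ∧
    Summable (fun k : ℕ => Am (k + 2)) := by
  constructor
  · refine Asymptotics.IsBigO.of_bound 84 ?_
    filter_upwards [eventually_ge_atTop 2] with m hm
    have hm0 : 0 < m := by linarith
    rw [Real.norm_eq_abs, Real.norm_eq_abs, abs_of_pos (zpow_pos hm0 _), zpow_neg, zpow_ofNat,
      ← div_eq_mul_inv]
    exact abs_Am_sub_le hm
  · have hsum : Summable fun k : ℕ => 43 / ((k : ℝ) + 2) ^ 4 := by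
      have h4 : Summable fun k : ℕ => 43 * (1 / (k : ℝ) ^ 4) :=
        (Real.summable_one_div_nat_pow.mpr (by norm_num)).mul_left 43
      refine ((summable_nat_add_iff 2).mpr h4).congr fun k => ?_
      push_cast
      ring
    exact hsum.of_norm_bounded fun k => abs_Am_le (by linarith [k.cast_nonneg (α := ℝ)])
end
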